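/- arXiv:1312.1023 — 5 statements merged into one kernel-verified Lean document; each statement's English description precedes it below -/
import Mathlib

section
/- Let σ be a 3 2 1-avoiding permutation of {1,...,ℓ}. If 1 ≤ s < t ≤ ℓ, σ(s) ≥ s, and σ(t) ≥ t, then σ(s) < σ(t). -/
/-- A permutation `σ` of `{1,…,ℓ}` (modeled as `Fin ℓ`) is `3 2 1`-avoiding if there do not
exist `a < b < c` with `σ c < σ b < σ a`. -/
def Avoids321 {ℓ : ℕ} (σ : Equiv.Perm (Fin ℓ)) : Prop :=
  ¬ ∃ a b c : Fin ℓ, a < b ∧ b < c ∧ σ c < σ b ∧ σ b < σ a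

theorem stmt_0 {ℓ : ℕ} (σ : Equiv.Perm (Fin ℓ)) (hσ : Avoids321 σ)
    (s t : Fin ℓ) (hst : s < t) (hs : s ≤ σ s) (ht : t ≤ σ t) :
    σ s < σ t := by
  by_contra h
  push_neg at h
  have hne : σ s ≠ σ t := fun he => absurd (σ.injective he) (ne_of_lt hst)
  have hts : σ t < σ s := lt_of_le_of_ne h (fun he => hne he.symm)
  apply hσ
  have hexists : ∃ u, t < u ∧ σ u < σ t := by
    by_contra hu
    push_neg at hu
    have hsub : (insert s (Finset.Ici t)).image σ ⊆ Finset.Ici (σ t) := by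
      intro v hv
      simp only [Finset.mem_image, Finset.mem_insert, Finset.mem_Ici] at hv ⊢
      obtain ⟨u, hu', rfl⟩ := hv
      rcases hu' with rfl | hu'
      · exact le_of_lt hts
      · rcases eq_or_lt_of_le hu' with rfl | h'
        · exact le_refl _
        · exact hu _ h'
    have hcard := Finset.card_le_card hsub
    rw [Finset.card_image_of_injective _ σ.injective,
      Finset.card_insert_of_notMem (by simp [not_le.2 hst]),
      Fin.card_Ici, Fin.card_Ici] at hcard
    have h1 : (t : ℕ) ≤ (σ t : ℕ) := ht
    have h2 : (t : ℕ) < ℓ := t.isLt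
    omega
  obtain ⟨u, htu, hut⟩ := hexists
  exact ⟨s, t, u, hst, htu, hut, hts⟩
end

section
/- The number of 3 2 1-avoiding permutations of {1,...,ℓ} equals the Catalan number C_ℓ = (1/(ℓ+1))·binom(2ℓ, ℓ). -/
/-!
A permutation is determined by the positions and values of its left-to-right maxima (records)
together with the word of its remaining values, and it avoids `321` exactly when that word is
increasing. So a `321`-avoiding permutation `σ` is determined by its running maximum
`i ↦ max_{j ≤ i} σ j`, which is a weakly increasing self-map `M` of `Fin n` with `i ≤ M i`.
Conversely every such `M` is the running maximum of a `321`-avoiding permutation: put `M i` at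
each record of `M` and the values missing from the range of `M`, in increasing order, at the
other positions; a counting argument shows that each of these values stays below `M i`.
Finally, these maps are Dyck paths in disguise, and splitting at the least fixed point of `M`
(the first return to the diagonal) gives the Catalan recursion.
-/

open Finset

section Records

variable {ι α : Type*} [LinearOrder ι] [LinearOrder α] {f : ι → α} {i j : ι}

def IsRecord (f : ι → α) (i : ι) : Prop := ∀ j < i, f j < f i

lemma IsRecord.le_of_apply_le (hi : IsRecord f i) (h : f i ≤ f j) : i ≤ j :=
  not_lt.1 fun hji => (hi j hji).not_ge h

lemma injOn_setOf_isRecord : Set.InjOn f {i | IsRecord f i} := fun _ hi _ hj h =>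
  le_antisymm (IsRecord.le_of_apply_le hi h.le) (IsRecord.le_of_apply_le hj h.ge)

lemma Monotone.exists_isRecord_eq [WellFoundedLT ι] (hf : Monotone f) (i : ι) :
    ∃ j ≤ i, IsRecord f j ∧ f j = f i := by
  obtain ⟨j, hj, hmin⟩ := wellFounded_lt.has_min {j | f j = f i} ⟨i, rfl⟩
  refine ⟨j, not_lt.1 (hmin i rfl), fun k hk => (hf hk.le).lt_of_ne fun h => hmin k ?_ hk, hj⟩
  exact h.trans hj

variable [LocallyFiniteOrderBot ι]

lemma apply_eq_partialSups_of_isRecord (h : IsRecord (partialSups f) i) :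
    f i = partialSups f i := by
  obtain ⟨j, hji, hj⟩ := exists_partialSups_eq f i
  obtain rfl : j = i := hji.antisymm (h.le_of_apply_le (hj.le.trans (le_partialSups f j)))
  exact hj.symm

lemma exists_apply_lt_of_not_isRecord_partialSups (hf : Function.Injective f)
    (h : ¬IsRecord (partialSups f) i) : ∃ j < i, f i < f j := by
  simp only [IsRecord, not_forall, not_lt] at h
  obtain ⟨j, hji, hle⟩ := h
  obtain ⟨k, hkj, hk⟩ := exists_partialSups_eq f j
  have hki : k < i := hkj.trans_lt hji
  refine ⟨k, hki, ((le_partialSups f i).trans (hle.trans hk.le)).lt_of_ne ?_⟩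
  exact hf.ne hki.ne'

end Records

namespace Finset

variable {α : Type*} [LinearOrder α] {s : Finset α} {k : ℕ} (h : #s = k)

lemma lt_card_filter_le_orderEmbOfFin (x : Fin k) :
    (x : ℕ) < #{b ∈ s | b ≤ s.orderEmbOfFin h x} := by
  have : (Iic x).image (s.orderEmbOfFin h) ⊆ {b ∈ s | b ≤ s.orderEmbOfFin h x} := by
    simp only [subset_iff, mem_image, mem_Iic, mem_filter]
    rintro _ ⟨y, hy, rfl⟩
    exact ⟨orderEmbOfFin_mem s h y, (s.orderEmbOfFin h).monotone hy⟩
  have := card_le_card this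
  rwa [card_image_of_injective _ (s.orderEmbOfFin h).injective, Fin.card_Iic] at this

lemma orderEmbOfFin_lt_of_lt_card_filter {x : Fin k} {a : α}
    (hx : (x : ℕ) < #{b ∈ s | b < a}) : s.orderEmbOfFin h x < a := by
  by_contra! hax
  have : {b ∈ s | b < a} ⊆ (Iio x).image (s.orderEmbOfFin h) := by
    intro b hb
    rw [mem_filter] at hb
    obtain ⟨y, rfl⟩ : b ∈ Set.range (s.orderEmbOfFin h) := by
      rw [range_orderEmbOfFin]; exact hb.1
    exact mem_image_of_mem _ (mem_Iio.2 ((s.orderEmbOfFin h).lt_iff_lt.1 (hb.2.trans_le hax)))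
  have := (card_le_card this).trans card_image_le
  rw [Fin.card_Iio] at this
  omega

end Finset

@[ext]
structure CatalanSeq (n : ℕ) where
  toFun : Fin n → Fin n
  monotone' : Monotone toFun
  le_apply' : ∀ i, i ≤ toFun i

namespace CatalanSeq

variable {n : ℕ}

instance : FunLike (CatalanSeq n) (Fin n) (Fin n) where
  coe := toFun
  coe_injective _ _ := CatalanSeq.ext

instance : Finite (CatalanSeq n) := .of_injective _ DFunLike.coe_injective

protected lemma monotone (M : CatalanSeq n) : Monotone M := M.monotone'

lemma le_apply (M : CatalanSeq n) (i : Fin n) : i ≤ M i := M.le_apply' i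

noncomputable def firstFix (M : CatalanSeq (n + 1)) : Fin (n + 1) :=
  ({j | M j = j} : Finset (Fin (n + 1))).min' <| show Finset.Nonempty _ from
    ⟨Fin.last n, by simpa using le_antisymm (Fin.le_last _) (M.le_apply _)⟩

lemma firstFix_eq_iff {M : CatalanSeq (n + 1)} {k : Fin (n + 1)} :
    firstFix M = k ↔ M k = k ∧ ∀ j < k, j < M j := by
  rw [firstFix, min'_eq_iff]
  simp only [mem_filter, mem_univ, true_and]
  refine and_congr_right fun _ => ⟨fun h j hj => ?_, fun h j hj => ?_⟩
  · exact (M.le_apply j).lt_of_ne fun hfix => (h j hfix.symm).not_gt hj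
  · exact not_lt.1 fun hjk => (h j hjk).ne hj.symm

section glue

variable (k : Fin (n + 1)) (A : CatalanSeq k) (B : CatalanSeq (n - k))

def glueFun (j : Fin (n + 1)) : Fin (n + 1) :=
  if h : j < k then ⟨A ⟨j, h⟩ + 1, by have := (A ⟨j, h⟩).isLt; omega⟩
  else if h' : j = k then k
  else ⟨B ⟨j - k - 1, by omega⟩ + k + 1, by
    have := (B ⟨j - k - 1, by omega⟩).isLt; omega⟩

variable {k A B} {j : Fin (n + 1)}

lemma glueFun_of_lt (h : j < k) : (glueFun k A B j : ℕ) = A ⟨j, h⟩ + 1 := by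
  simp [glueFun, h]

lemma glueFun_self : glueFun k A B k = k := by
  simp [glueFun]

lemma glueFun_of_gt (h : k < j) :
    (glueFun k A B j : ℕ) = B ⟨j - k - 1, by omega⟩ + k + 1 := by
  simp [glueFun, h.not_gt, h.ne']

lemma glueFun_le_self (h : j ≤ k) : glueFun k A B j ≤ k := by
  rcases h.lt_or_eq with h | rfl
  · have := (A ⟨j, h⟩).isLt
    rw [Fin.le_def, glueFun_of_lt h]; omega
  · exact glueFun_self.le

lemma self_le_glueFun (h : k ≤ j) : k ≤ glueFun k A B j := by
  rcases h.lt_or_eq with h | rfl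
  · rw [Fin.le_def, glueFun_of_gt h]; omega
  · exact glueFun_self.ge

lemma le_glueFun (j : Fin (n + 1)) : j ≤ glueFun k A B j := by
  rcases lt_trichotomy j k with h | rfl | h
  · have : (j : ℕ) ≤ A ⟨j, h⟩ := A.le_apply ⟨j, h⟩
    rw [Fin.le_def, glueFun_of_lt h]; omega
  · exact glueFun_self.ge
  · have : (j : ℕ) - k - 1 ≤ B ⟨j - k - 1, by omega⟩ :=
      B.le_apply ⟨j - k - 1, by omega⟩
    rw [Fin.le_def, glueFun_of_gt h]; omega

lemma monotone_glueFun : Monotone (glueFun k A B) := by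
  intro a b hab
  by_cases hb : b < k
  · have : (A ⟨a, hab.trans_lt hb⟩ : ℕ) ≤ A ⟨b, hb⟩ := A.monotone hab
    rw [Fin.le_def, glueFun_of_lt hb, glueFun_of_lt (hab.trans_lt hb)]
    omega
  by_cases ha : k < a
  · have : (B ⟨a - k - 1, by omega⟩ : ℕ) ≤ B ⟨b - k - 1, by omega⟩ :=
      B.monotone (Fin.mk_le_mk.2 (by omega))
    rw [Fin.le_def, glueFun_of_gt ha, glueFun_of_gt (ha.trans_le hab)]
    omega
  exact (glueFun_le_self (not_lt.1 ha)).trans (self_le_glueFun (not_lt.1 hb))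

variable (k A B) in
def glue : CatalanSeq (n + 1) := ⟨glueFun k A B, monotone_glueFun, le_glueFun⟩

@[simp] lemma glue_apply (j : Fin (n + 1)) : glue k A B j = glueFun k A B j := rfl

lemma firstFix_glue : firstFix (glue k A B) = k := by
  refine firstFix_eq_iff.2 ⟨glueFun_self, fun j hj => ?_⟩
  have : (j : ℕ) ≤ A ⟨j, hj⟩ := A.le_apply ⟨j, hj⟩
  rw [Fin.lt_def, glue_apply, glueFun_of_lt hj]; omega

end glue

def insidePart {k : Fin (n + 1)} (M : CatalanSeq (n + 1)) (hM : firstFix M = k) :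
    CatalanSeq k where
  toFun j := ⟨M ⟨j, by omega⟩ - 1, by
    have h₁ : (j : ℕ) < M ⟨j, by omega⟩ := (firstFix_eq_iff.1 hM).2 ⟨j, by omega⟩ j.isLt
    have h₂ : (M ⟨j, by omega⟩ : ℕ) ≤ M k := M.monotone (Fin.mk_le_mk.2 j.isLt.le)
    rw [(firstFix_eq_iff.1 hM).1] at h₂
    omega⟩
  monotone' a b hab := by
    have : (M ⟨a, by omega⟩ : ℕ) ≤ M ⟨b, by omega⟩ := M.monotone (Fin.mk_le_mk.2 hab)
    simp only [Fin.le_def]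
    omega
  le_apply' j := by
    have : (j : ℕ) < M ⟨j, by omega⟩ := (firstFix_eq_iff.1 hM).2 ⟨j, by omega⟩ j.isLt
    simp only [Fin.le_def]
    omega

def outsidePart (k : Fin (n + 1)) (M : CatalanSeq (n + 1)) : CatalanSeq (n - k) where
  toFun j := ⟨M ⟨k + 1 + j, by omega⟩ - (k + 1), by
    have := (M ⟨k + 1 + j, by omega⟩).isLt
    have := j.isLt
    omega⟩
  monotone' a b hab := by
    have : (M ⟨k + 1 + a, by omega⟩ : ℕ) ≤ M ⟨k + 1 + b, by omega⟩ :=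
      M.monotone (Fin.mk_le_mk.2 (by simp only [Fin.le_def] at hab; omega))
    simp only [Fin.le_def]
    omega
  le_apply' j := by
    have : k + 1 + (j : ℕ) ≤ M ⟨k + 1 + j, by omega⟩ := M.le_apply ⟨k + 1 + j, by omega⟩
    simp only [Fin.le_def]
    omega

variable {k : Fin (n + 1)}

lemma glue_insidePart_outsidePart (M : CatalanSeq (n + 1)) (hM : firstFix M = k) :
    glue k (insidePart M hM) (outsidePart k M) = M := by
  obtain ⟨hk, hlt⟩ := firstFix_eq_iff.1 hM
  refine DFunLike.ext _ _ fun j => Fin.ext ?_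
  rcases lt_trichotomy j k with h | rfl | h
  · have : (j : ℕ) < M j := hlt j h
    rw [glue_apply, glueFun_of_lt h]
    exact Nat.sub_add_cancel (by omega : 1 ≤ (M j : ℕ))
  · rw [glue_apply, glueFun_self, hk]
  · have hj : (⟨k + 1 + (j - k - 1 : ℕ), by omega⟩ : Fin (n + 1)) = j :=
      Fin.ext (by simp; omega)
    have : (j : ℕ) ≤ M j := M.le_apply j
    rw [glue_apply, glueFun_of_gt h]
    change (M ⟨k + 1 + (j - k - 1 : ℕ), _⟩ : ℕ) - (k + 1) + k + 1 = M j
    rw [hj]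
    omega

lemma insidePart_glue (A : CatalanSeq k) (B : CatalanSeq (n - k)) :
    insidePart (glue k A B) firstFix_glue = A :=
  DFunLike.ext _ _ fun j => Fin.ext <| by
    change (glueFun k A B ⟨j, _⟩ : ℕ) - 1 = A j
    rw [glueFun_of_lt j.isLt]
    rfl

lemma outsidePart_glue (A : CatalanSeq k) (B : CatalanSeq (n - k)) :
    outsidePart k (glue k A B) = B :=
  DFunLike.ext _ _ fun j => Fin.ext <| by
    change (glueFun k A B ⟨k + 1 + j, _⟩ : ℕ) - (k + 1) = B j
    rw [glueFun_of_gt (Fin.mk_lt_mk.2 (by omega))]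
    simp [show (k + 1 + j - k - 1 : ℕ) = j by omega]

variable (k) in
def firstReturnEquiv :
    {M : CatalanSeq (n + 1) // firstFix M = k} ≃ CatalanSeq k × CatalanSeq (n - k) where
  toFun M := (insidePart M.1 M.2, outsidePart k M.1)
  invFun p := ⟨glue k p.1 p.2, firstFix_glue⟩
  left_inv M := Subtype.ext (glue_insidePart_outsidePart M.1 M.2)
  right_inv p := Prod.ext (insidePart_glue p.1 p.2) (outsidePart_glue p.1 p.2)

theorem card_eq_catalan (n : ℕ) : Nat.card (CatalanSeq n) = catalan n := by
  induction n using Nat.strong_induction_on with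
  | _ n ih =>
    cases n with
    | zero =>
      have : Unique (CatalanSeq 0) :=
        ⟨⟨⟨Fin.elim0, fun i => i.elim0, fun i => i.elim0⟩⟩,
          fun _ => DFunLike.ext _ _ fun i => i.elim0⟩
      rw [Nat.card_unique, catalan_zero]
    | succ n =>
      rw [catalan_succ, ← Nat.card_congr (Equiv.sigmaFiberEquiv firstFix), Nat.card_sigma]
      refine Finset.sum_congr rfl fun k _ => ?_
      rw [Nat.card_congr (firstReturnEquiv k), Nat.card_prod, ih k (by omega),
        ih (n - k) (by omega)]

section fill

instance (M : CatalanSeq n) : DecidablePred (IsRecord M) := fun _ => by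
  unfold IsRecord; infer_instance

def records (M : CatalanSeq n) : Finset (Fin n) := {i | IsRecord M i}

def gaps (M : CatalanSeq n) : Finset (Fin n) := (univ.image M)ᶜ

variable (M : CatalanSeq n) {i : Fin n}

lemma mem_records : i ∈ M.records ↔ IsRecord M i := by simp [records]

lemma mem_gaps {v : Fin n} : v ∈ M.gaps ↔ ∀ j, M j ≠ v := by simp [gaps]

lemma image_records : M.records.image M = univ.image M := by
  refine (image_subset_image (subset_univ _)).antisymm fun v hv => ?_
  obtain ⟨j, -, rfl⟩ := mem_image.1 hv
  obtain ⟨i, -, hi, hij⟩ := M.monotone.exists_isRecord_eq j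
  exact mem_image.2 ⟨i, M.mem_records.2 hi, hij⟩

lemma card_gaps : #M.gaps = #M.recordsᶜ := by
  rw [gaps, card_compl, card_compl, ← image_records,
    card_image_of_injOn (injOn_setOf_isRecord.mono fun i hi => M.mem_records.1 hi)]

noncomputable def fill : Fin n → Fin n := fun i =>
  if h : IsRecord M i then M i
  -- the gap whose rank among the gaps is the rank of `i` among the non-records
  else M.gaps.orderEmbOfFin M.card_gaps
    ((M.recordsᶜ.orderIsoOfFin rfl).symm ⟨i, mem_compl.2 (mt M.mem_records.1 h)⟩)

lemma fill_of_isRecord (h : IsRecord M i) : M.fill i = M i := dif_pos h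

lemma fill_orderEmbOfFin (x : Fin #M.recordsᶜ) :
    M.fill (M.recordsᶜ.orderEmbOfFin rfl x) = M.gaps.orderEmbOfFin M.card_gaps x := by
  have hx := mem_compl.1 (orderEmbOfFin_mem _ rfl x)
  rw [fill, dif_neg (mt M.mem_records.2 hx), (OrderIso.symm_apply_eq _).2]
  exact Subtype.ext (coe_orderIsoOfFin_apply _ _ _).symm

lemma exists_orderEmbOfFin_eq (h : ¬IsRecord M i) :
    ∃ x, M.recordsᶜ.orderEmbOfFin rfl x = i := by
  rw [← Set.mem_range, range_orderEmbOfFin, coe_compl, Set.mem_compl_iff, mem_coe, mem_records]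
  exact h

lemma fill_lt_fill {a b : Fin n} (ha : ¬IsRecord M a) (hb : ¬IsRecord M b) (hab : a < b) :
    M.fill a < M.fill b := by
  obtain ⟨x, rfl⟩ := M.exists_orderEmbOfFin_eq ha
  obtain ⟨y, rfl⟩ := M.exists_orderEmbOfFin_eq hb
  rw [fill_orderEmbOfFin, fill_orderEmbOfFin, OrderEmbedding.lt_iff_lt]
  exact (OrderEmbedding.lt_iff_lt _).1 hab

lemma card_filter_compl_records_le (i : Fin n) :
    #{j ∈ M.recordsᶜ | j ≤ i} ≤ #{v ∈ M.gaps | v < M i} := by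
  -- The values `≤ M i` of `M` are taken at records `≤ i`; compare with `i ≤ M i`.
  have hsplit (t : Finset (Fin n)) (a : Fin n) :
      #{b ∈ t | b ≤ a} + #{b ∈ tᶜ | b ≤ a} = a + 1 := by
    rw [← Fin.card_Iic a, ← card_filter_add_card_filter_not (s := Iic a) (· ∈ t)]
    congr 2 <;> ext <;> simp [and_comm]
  have hvalues : #{v ∈ univ.image M | v ≤ M i} ≤ #{j ∈ M.records | j ≤ i} := by
    refine (card_le_card fun v hv => ?_).trans (card_image_le (f := M))
    obtain ⟨hv, hvi⟩ := mem_filter.1 hv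
    obtain ⟨j, -, rfl⟩ := mem_image.1 hv
    obtain ⟨k, -, hk, hkj⟩ := M.monotone.exists_isRecord_eq j
    refine mem_image.2 ⟨k, mem_filter.2 ⟨M.mem_records.2 hk, ?_⟩, hkj⟩
    exact hk.le_of_apply_le (hkj ▸ hvi)
  have hgaps : {v ∈ M.gaps | v < M i} = {v ∈ M.gaps | v ≤ M i} :=
    filter_congr fun v hv => ⟨le_of_lt, fun h => h.lt_of_ne fun e => M.mem_gaps.1 hv i e.symm⟩
  have hdiag : (i : ℕ) ≤ M i := M.le_apply i
  have := hsplit M.records i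
  have := hsplit (univ.image M) (M i)
  rw [hgaps, gaps]
  omega

lemma fill_lt (h : ¬IsRecord M i) : M.fill i < M i := by
  obtain ⟨x, rfl⟩ := M.exists_orderEmbOfFin_eq h
  rw [fill_orderEmbOfFin]
  exact orderEmbOfFin_lt_of_lt_card_filter _
    ((lt_card_filter_le_orderEmbOfFin rfl x).trans_le (M.card_filter_compl_records_le _))

lemma fill_le (i : Fin n) : M.fill i ≤ M i := by
  by_cases h : IsRecord M i
  · exact (M.fill_of_isRecord h).le
  · exact (M.fill_lt h).le

lemma fill_lt_fill_of_isRecord {a b : Fin n} (hb : IsRecord M b) (hab : a < b) :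
    M.fill a < M.fill b :=
  (M.fill_le a).trans_lt ((hb a hab).trans_eq (M.fill_of_isRecord hb).symm)

lemma surjective_fill : Function.Surjective M.fill := by
  intro v
  by_cases hv : v ∈ M.gaps
  · obtain ⟨x, rfl⟩ : v ∈ Set.range (M.gaps.orderEmbOfFin M.card_gaps) := by
      rwa [range_orderEmbOfFin]
    exact ⟨_, M.fill_orderEmbOfFin x⟩
  · obtain ⟨j, rfl⟩ : ∃ j, M j = v := by simpa [mem_gaps] using hv
    obtain ⟨i, -, hi, hij⟩ := M.monotone.exists_isRecord_eq j
    exact ⟨i, (M.fill_of_isRecord hi).trans hij⟩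

lemma partialSups_fill : ⇑(partialSups M.fill) = M := by
  funext i
  refine le_antisymm (partialSups_le _ _ _ fun j hj => (M.fill_le j).trans (M.monotone hj)) ?_
  obtain ⟨j, hji, hj, hjM⟩ := M.monotone.exists_isRecord_eq i
  rw [← hjM, ← M.fill_of_isRecord hj]
  exact le_partialSups_of_le _ hji

noncomputable def fillPerm : Equiv.Perm (Fin n) :=
  Equiv.ofBijective M.fill (Finite.surjective_iff_bijective.1 M.surjective_fill)

lemma avoids321_fillPerm : Avoids321 M.fillPerm := by
  rintro ⟨a, b, c, hab, hbc, hcb, hba⟩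
  have hb : ¬IsRecord M b := fun h => (M.fill_lt_fill_of_isRecord h hab).not_gt hba
  have hc : ¬IsRecord M c := fun h => (M.fill_lt_fill_of_isRecord h hbc).not_gt hcb
  exact (M.fill_lt_fill hb hc hbc).not_gt hcb

end fill

section ofPerm

variable (σ : Equiv.Perm (Fin n))

lemma le_partialSups_apply (i : Fin n) : i ≤ partialSups σ i := by
  by_contra! h
  have := card_le_card_of_injOn σ (s := Iic i) (t := Iio i)
    (fun j hj => mem_Iio.2 ((le_partialSups_of_le σ (mem_Iic.1 hj)).trans_lt h))
    σ.injective.injOn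
  simp at this

def ofPerm : CatalanSeq n :=
  ⟨partialSups σ, (partialSups σ).monotone, le_partialSups_apply σ⟩

variable {σ}

lemma apply_lt_apply_of_not_isRecord (hσ : Avoids321 σ) {a b : Fin n}
    (ha : ¬IsRecord (ofPerm σ) a) (hab : a < b) : σ a < σ b := by
  obtain ⟨j, hja, hj⟩ := exists_apply_lt_of_not_isRecord_partialSups σ.injective ha
  exact (σ.injective.ne hab.ne).lt_of_le (not_lt.1 fun hba => hσ ⟨j, a, b, hja, hab, hba, hj⟩)

lemma apply_mem_gaps (ha : ¬IsRecord (ofPerm σ) a) : σ a ∈ (ofPerm σ).gaps := by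
  refine (ofPerm σ).mem_gaps.2 fun j hj => ?_
  obtain ⟨k, -, hk, hkj⟩ := (ofPerm σ).monotone.exists_isRecord_eq j
  obtain rfl : k = a := σ.injective ((apply_eq_partialSups_of_isRecord hk).trans (hkj.trans hj))
  exact ha hk

lemma fill_ofPerm (hσ : Avoids321 σ) : (ofPerm σ).fill = σ := by
  funext i
  by_cases hi : IsRecord (ofPerm σ) i
  · exact ((ofPerm σ).fill_of_isRecord hi).trans (apply_eq_partialSups_of_isRecord hi).symm
  obtain ⟨x, rfl⟩ := (ofPerm σ).exists_orderEmbOfFin_eq hi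
  have hrec (y) : ¬IsRecord (ofPerm σ) ((ofPerm σ).recordsᶜ.orderEmbOfFin rfl y) :=
    mt (ofPerm σ).mem_records.2 (mem_compl.1 (orderEmbOfFin_mem _ _ y))
  -- on the non-records `σ` increases through the gaps, so it lists them in order
  have hσgaps : σ ∘ (ofPerm σ).recordsᶜ.orderEmbOfFin rfl =
      (ofPerm σ).gaps.orderEmbOfFin (ofPerm σ).card_gaps :=
    orderEmbOfFin_unique _ (fun y => apply_mem_gaps (hrec y)) fun y z hyz =>
      apply_lt_apply_of_not_isRecord hσ (hrec y) ((OrderEmbedding.lt_iff_lt _).2 hyz)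
  rw [fill_orderEmbOfFin, ← hσgaps, Function.comp_apply]

end ofPerm

end CatalanSeq

open CatalanSeq in
noncomputable def avoids321EquivCatalanSeq (n : ℕ) :
    {σ : Equiv.Perm (Fin n) // Avoids321 σ} ≃ CatalanSeq n where
  toFun σ := ofPerm σ.1
  invFun M := ⟨M.fillPerm, M.avoids321_fillPerm⟩
  left_inv σ := Subtype.ext <| Equiv.ext <| congrFun (fill_ofPerm σ.2)
  right_inv M := DFunLike.ext' M.partialSups_fill

/-- The number of `3 2 1`-avoiding permutations of `{1,…,ℓ}` is the Catalan number
`C_ℓ = (1/(ℓ+1))·binom(2ℓ,ℓ)`. -/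
theorem stmt_4 (ℓ : ℕ) :
    Nat.card {σ : Equiv.Perm (Fin ℓ) // Avoids321 σ} = catalan ℓ ∧
    catalan ℓ = (Nat.choose (2 * ℓ) ℓ) / (ℓ + 1) :=
  ⟨(Nat.card_congr (avoids321EquivCatalanSeq ℓ)).trans (CatalanSeq.card_eq_catalan ℓ),
    catalan_eq_centralBinom_div ℓ⟩
end

section
/- Let σ be a 3 2 1-avoiding permutation of {1,...,ℓ} and let s be such that σ(s) ≥ s (i.e., s is a fixed point or an excedance of σ). Then s lies in the first row of the recording tableau of σ under the Robinson-Schensted correspondence. -/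
/-- Robinson–Schensted row insertion of `x` into a single row: `x` is appended at the end
if it is larger than all entries; otherwise it replaces (bumps) the smallest entry `y > x`.
Returns the new row together with the bumped entry, if any. -/
def rowInsert (x : ℕ) : List ℕ → List ℕ × Option ℕ
  | [] => ([x], none)
  | y :: ys =>
    if x < y then (x :: ys, some y)
    else
      let p := rowInsert x ys
      (y :: p.1, p.2)

/-- Robinson–Schensted insertion of `x` into a tableau (a list of rows): insert into the
first row; a bumped entry is inserted into the subsequent rows. Returns the new tableau
together with the (0-indexed) row in which the new box was created. -/
def insertTableau (x : ℕ) : List (List ℕ) → List (List ℕ) × ℕ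
  | [] => ([[x]], 0)
  | r :: rest =>
    match rowInsert x r with
    | (r', none) => (r' :: rest, 0)
    | (r', some y) =>
      let p := insertTableau y rest
      (r' :: p.1, p.2 + 1)

/-- Robinson–Schensted insertion of a word: returns the insertion tableau `P` together with
the list whose `s`-th entry (0-indexed) is the row of `P` in which the box created at step
`s` appears — equivalently, the row of the recording tableau `Q` containing entry `s+1`. -/
def RSsteps (w : List ℕ) : List (List ℕ) × List ℕ :=
  w.foldl (fun p x => let q := insertTableau x p.1; (q.1, p.2 ++ [q.2])) ([], [])

/-- The word of a permutation `σ` of `Fin ℓ`: `σ(1), σ(2), …, σ(ℓ)`. -/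
def permWord {ℓ : ℕ} (σ : Equiv.Perm (Fin ℓ)) : List ℕ :=
  List.ofFn fun i => (σ i : ℕ)

/-! A letter exceeding all earlier letters is appended to the first row of the insertion tableau,
which contains only earlier letters, so its box is created in the first row. It therefore
suffices that a fixed point or excedance `s` of a 321-avoiding `σ` is a left-to-right maximum:
if some `t < s` had `σ s < σ t`, then 321-avoidance would force `σ s < σ u` for every `u > s`,
leaving fewer than `s ≤ σ s` positions for the `σ s` values below `σ s`. -/

lemma card_filter_apply_lt {ℓ : ℕ} (σ : Equiv.Perm (Fin ℓ)) (v : Fin ℓ) :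
    (Finset.univ.filter fun i => σ i < v).card = v := by
  have : (Finset.univ.filter fun i => σ i < v) = (Finset.Iio v).map σ.symm.toEmbedding := by
    ext i
    simp
  rw [this, Finset.card_map, Fin.card_Iio]

theorem Avoids321.apply_lt_apply_of_le_apply {ℓ : ℕ} {σ : Equiv.Perm (Fin ℓ)}
    (hσ : Avoids321 σ) {s t : Fin ℓ} (hs : s ≤ σ s) (hts : t < s) : σ t < σ s := by
  by_contra! hst
  replace hst : σ s < σ t := lt_of_le_of_ne hst (σ.injective.ne hts.ne')
  have hbelow : (Finset.univ.filter fun i => σ i < σ s) ⊆ (Finset.Iio s).erase t := by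
    intro i hi
    simp only [Finset.mem_filter, Finset.mem_univ, true_and] at hi
    simp only [Finset.mem_erase, Finset.mem_Iio]
    refine ⟨by rintro rfl; exact lt_asymm hi hst, ?_⟩
    by_contra! hsi
    rcases hsi.lt_or_eq with hsi | rfl
    · exact hσ ⟨t, s, i, hts, hsi, hi, hst⟩
    · exact lt_irrefl _ hi
  have hcard := Finset.card_le_card hbelow
  rw [card_filter_apply_lt, Finset.card_erase_of_mem (Finset.mem_Iio.mpr hts),
    Fin.card_Iio] at hcard
  have : (t : ℕ) < s := hts
  have : (s : ℕ) ≤ σ s := hs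
  omega

lemma rowInsert_fst_subset (x : ℕ) (r : List ℕ) : (rowInsert x r).1 ⊆ x :: r := by
  induction r with
  | nil => simp [rowInsert]
  | cons y ys ih =>
    unfold rowInsert
    split_ifs
    · exact List.cons_subset_cons _ (List.subset_cons_self _ _)
    · intro z hz
      rcases List.mem_cons.mp hz with rfl | hz
      · simp
      · rcases List.mem_cons.mp (ih hz) with rfl | hz <;> simp [*]

lemma mem_of_rowInsert_snd_eq_some {x y : ℕ} {r : List ℕ} (h : (rowInsert x r).2 = some y) :
    y ∈ r := by
  induction r with
  | nil => simp [rowInsert] at h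
  | cons z zs ih =>
    unfold rowInsert at h
    split_ifs at h
    · simp_all
    · exact List.mem_cons_of_mem _ (ih h)

lemma rowInsert_snd_eq_none {x : ℕ} {r : List ℕ} (h : ∀ y ∈ r, y ≤ x) :
    (rowInsert x r).2 = none := by
  induction r with
  | nil => rfl
  | cons y ys ih =>
    simp only [List.mem_cons, forall_eq_or_imp] at h
    simp [rowInsert, not_lt.mpr h.1, ih h.2]

lemma flatten_insertTableau_fst_subset (x : ℕ) (T : List (List ℕ)) :
    (insertTableau x T).1.flatten ⊆ x :: T.flatten := by
  induction T generalizing x with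
  | nil => simp [insertTableau]
  | cons r rest ih =>
    unfold insertTableau
    have hrow := rowInsert_fst_subset x r
    rcases hr : rowInsert x r with ⟨r', _ | y⟩ <;> rw [hr] at hrow
    · intro z hz
      simp only [List.flatten_cons, List.mem_append, List.mem_cons] at hz ⊢
      rcases hz with hz | hz
      · simpa [or_assoc] using Or.inl (hrow hz)
      · exact Or.inr (Or.inr hz)
    · have hy : y ∈ r := mem_of_rowInsert_snd_eq_some (by rw [hr])
      intro z hz
      simp only [List.flatten_cons, List.mem_append, List.mem_cons] at hz ⊢
      rcases hz with hz | hz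
      · simpa [or_assoc] using Or.inl (hrow hz)
      · rcases List.mem_cons.mp (ih y hz) with rfl | hz
        · exact Or.inr (Or.inl hy)
        · exact Or.inr (Or.inr hz)

lemma insertTableau_snd_eq_zero {x : ℕ} {T : List (List ℕ)} (h : ∀ y ∈ T.flatten, y ≤ x) :
    (insertTableau x T).2 = 0 := by
  cases T with
  | nil => rfl
  | cons r rest =>
    unfold insertTableau
    rcases hr : rowInsert x r with ⟨r', o⟩
    have hnone := rowInsert_snd_eq_none fun y hy =>
      h y (List.mem_flatten_of_mem List.mem_cons_self hy)
    obtain rfl : o = none := by simpa [hr] using hnone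
    rfl

lemma RSsteps_append_singleton (w : List ℕ) (x : ℕ) :
    RSsteps (w ++ [x]) = ((insertTableau x (RSsteps w).1).1,
      (RSsteps w).2 ++ [(insertTableau x (RSsteps w).1).2]) := by
  simp [RSsteps, List.foldl_append]

lemma flatten_RSsteps_fst_subset (w : List ℕ) : (RSsteps w).1.flatten ⊆ w := by
  induction w using List.reverseRecOn with
  | nil => simp [RSsteps]
  | append_singleton w x ih =>
    rw [RSsteps_append_singleton]
    intro y hy
    rcases List.mem_cons.mp (flatten_insertTableau_fst_subset x _ hy) with rfl | hy
    · simp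
    · simp [ih hy]

lemma length_RSsteps_snd (w : List ℕ) : (RSsteps w).2.length = w.length := by
  induction w using List.reverseRecOn with
  | nil => rfl
  | append_singleton w x ih => simp [RSsteps_append_singleton, ih]

lemma getElem?_RSsteps_snd (w : List ℕ) (s : ℕ) :
    (RSsteps w).2[s]? = w[s]?.map fun x => (insertTableau x (RSsteps (w.take s)).1).2 := by
  induction w using List.reverseRecOn generalizing s with
  | nil => simp [RSsteps]
  | append_singleton w x ih =>
    rw [RSsteps_append_singleton, List.getElem?_append, List.getElem?_append,
      length_RSsteps_snd, ih]
    rcases lt_trichotomy s w.length with hs | rfl | hs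
    · simp [hs, List.take_append_of_le_length hs.le]
    · simp
    · have : 1 ≤ s - w.length := by omega
      simp [hs.not_gt, List.getElem?_eq_none, this]

lemma mem_take_permWord {ℓ : ℕ} {σ : Equiv.Perm (Fin ℓ)} {s y : ℕ}
    (hy : y ∈ (permWord σ).take s) : ∃ t : Fin ℓ, (t : ℕ) < s ∧ (σ t : ℕ) = y := by
  obtain ⟨i, hi, rfl⟩ := List.mem_iff_getElem.mp hy
  simp only [List.length_take, permWord, List.length_ofFn, lt_min_iff] at hi
  exact ⟨⟨i, hi.2⟩, hi.1, by simp [permWord]⟩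

/-- If `σ` is `3 2 1`-avoiding and `σ(s) ≥ s` (a fixed point or excedance), then `s` lies
in the first row of the recording tableau of `σ` under the Robinson–Schensted
correspondence. -/
theorem stmt_9 {ℓ : ℕ} (σ : Equiv.Perm (Fin ℓ)) (hσ : Avoids321 σ)
    (s : Fin ℓ) (hs : s ≤ σ s) :
    (RSsteps (permWord σ)).2.getD (s : ℕ) 5 = 0 := by
  have hword : (permWord σ)[(s : ℕ)]? = some (σ s : ℕ) := by simp [permWord]
  rw [List.getD_eq_getElem?_getD, getElem?_RSsteps_snd, hword, Option.map_some,
    Option.getD_some]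
  refine insertTableau_snd_eq_zero fun y hy => ?_
  obtain ⟨t, hts, rfl⟩ := mem_take_permWord (flatten_RSsteps_fst_subset _ hy)
  exact (hσ.apply_lt_apply_of_le_apply hs (Fin.lt_def.mpr hts)).le
end

section
/- The number of pairs (P, Q) of standard Young tableaux of the same shape λ ⊢ ℓ, where λ has at most two rows, equals the Catalan number C_ℓ. -/
/-!
Record a standard tableau with at most two rows by the word whose `i`-th letter is an up step `U`
if `i` lies in the first row and a down step `D` if it lies in the second. Rows then increase
automatically, and column strictness says exactly that no prefix has more `D`s than `U`s, so
two-row standard tableaux with `ℓ` cells are the ballot words of length `ℓ`, of shape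
`(#U, #D)`. A pair `(P, Q)` of equal shape is thus a pair `(a, c)` of ballot words of length `ℓ`
with equally many `D`s, and `a` followed by `c` read backwards with `U` and `D` swapped is a Dyck
word of semilength `ℓ`; cutting a Dyck word of semilength `ℓ` in the middle inverts this. Dyck
words are counted by the Catalan numbers.
-/

/-- Entries strictly increase down each column of a tableau, given as a list of rows. -/
def ColsStrict (t : List (List ℕ)) : Prop :=
  ∀ i j : ℕ, i + 1 < t.length → j < (t.getD (i + 1) []).length →
    (t.getD i []).getD j 0 < (t.getD (i + 1) []).getD j 0

/-- `t` is a standard Young tableau with entries `{1,…,ℓ}`: rows strictly increase,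
columns strictly increase, row lengths weakly decrease, no empty rows, and the entries
are exactly `1,…,ℓ`, each occurring once. -/
def IsSYT (ℓ : ℕ) (t : List (List ℕ)) : Prop :=
  (∀ r ∈ t, List.Chain' (· < ·) r) ∧ ColsStrict t ∧
    List.Chain' (fun a b => b ≤ a) (t.map List.length) ∧ (∀ r ∈ t, r ≠ []) ∧
    t.flatten.Perm (List.range' 1 ℓ)

/-- `t` is a semistandard Young tableau: rows weakly increase, columns strictly
increase, row lengths weakly decrease, and no empty rows. -/
def IsSSYT (t : List (List ℕ)) : Prop :=
  (∀ r ∈ t, List.Chain' (· ≤ ·) r) ∧ ColsStrict t ∧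
    List.Chain' (fun a b => b ≤ a) (t.map List.length) ∧ (∀ r ∈ t, r ≠ [])

/-- The shape of a tableau: the list of its row lengths. -/
def shape (t : List (List ℕ)) : List ℕ := t.map List.length

/-- The complementary partition of `ν` inside the `k × n` rectangle:
`ν^c = (n − ν_k, n − ν_{k−1}, …, n − ν_1)`, where `ν` is padded with zeros to length `k`. -/
def complementary (n k : ℕ) (ν : List ℕ) : List ℕ :=
  ((ν ++ List.replicate (k - ν.length) 0).map (fun x => n - x)).reverse

/-- The conjugate (transpose) partition of `ν`: the `j`-th part is the number of parts of
`ν` exceeding `j`. -/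
def conjugate (ν : List ℕ) : List ℕ :=
  (List.range (ν.foldr max 0)).map (fun j => ν.countP (fun x => j < x))

open List DyckStep

namespace List

variable {α : Type*}

theorem Pairwise.lt_countP_le_iff [LinearOrder α] {l : List α} (hl : l.Pairwise (· ≤ ·))
    {j : ℕ} {m : α} : j < l.countP (· ≤ m) ↔ ∃ h : j < l.length, l[j] ≤ m := by
  induction l generalizing j with
  | nil => simp
  | cons a l ih =>
    rw [pairwise_cons] at hl
    by_cases ham : a ≤ m
    · cases j with
      | zero => simp [ham]
      | succ j => simp [ham, ih hl.2]
    · have hgt : ∀ x ∈ a :: l, m < x := by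
        simp only [mem_cons, forall_eq_or_imp]
        exact ⟨lt_of_not_ge ham, fun x hx => (lt_of_not_ge ham).trans_le (hl.1 x hx)⟩
      rw [countP_eq_zero.2 fun x hx => by simpa using hgt x hx]
      simpa using fun h => hgt _ (getElem_mem h)

/-- For the two rows of a tableau, this turns column strictness into the ballot condition. -/
theorem forall_countP_le_iff_forall_getElem_lt [LinearOrder α] {r₁ r₂ : List α}
    (h₁ : r₁.Pairwise (· ≤ ·)) (h₂ : r₂.Pairwise (· ≤ ·)) (hd : r₁.Disjoint r₂) :
    (∀ m, r₂.countP (· ≤ m) ≤ r₁.countP (· ≤ m)) ↔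
      ∀ j (h : j < r₂.length), ∃ h' : j < r₁.length, r₁[j] < r₂[j] := by
  constructor
  · intro hle j hj
    have hj₂ : j < r₂.countP (· ≤ r₂[j]) := h₂.lt_countP_le_iff.2 ⟨hj, le_rfl⟩
    obtain ⟨hj₁, hle₁⟩ := h₁.lt_countP_le_iff.1 (hj₂.trans_le (hle _))
    exact ⟨hj₁, hle₁.lt_of_ne fun he => hd (getElem_mem hj₁) (he ▸ getElem_mem hj)⟩
  · intro hlt m
    refine le_of_forall_lt fun j hj => ?_
    obtain ⟨hj₂, hm⟩ := h₂.lt_countP_le_iff.1 hj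
    obtain ⟨hj₁, hlt₁⟩ := hlt j hj₂
    exact h₁.lt_countP_le_iff.2 ⟨hj₁, hlt₁.le.trans hm⟩

theorem count_take_add_count_drop [BEq α] (w : List α) (k : ℕ) (a : α) :
    (w.take k).count a + (w.drop k).count a = w.count a := by
  rw [← count_append, take_append_drop]

theorem count_take_eq_countP_idxsOf [BEq α] (w : List α) (a : α) (m : ℕ) :
    (w.take m).count a = (w.idxsOf a 1).countP (· ≤ m) := by
  conv_rhs => rw [← take_append_drop m w]
  rw [idxsOf_append, countP_append, countP_eq_length.2, countP_eq_zero.2, length_idxsOf,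
    add_zero]
  · intro y hy
    have hlo := ge_of_mem_idxsOf y hy
    have hhi := lt_add_of_mem_idxsOf y hy
    simp only [length_take, length_drop] at hlo hhi
    simp only [decide_eq_true_eq, not_le]
    omega
  · intro y hy
    have := lt_add_of_mem_idxsOf y hy
    simp only [length_take] at this
    simp only [decide_eq_true_eq]
    omega

theorem disjoint_idxsOf_of_ne [BEq α] [LawfulBEq α] {a b : α} (hab : a ≠ b) (w : List α)
    (s : ℕ) : (w.idxsOf a s).Disjoint (w.idxsOf b s) := by
  intro i hi hj
  simp only [mem_idxsOf_iff_getElem_sub_pos, beq_iff_eq] at hi hj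
  exact hab (hi.2.2.symm.trans hj.2.2)

end List

def twoRowTableau (r₁ r₂ : List ℕ) : List (List ℕ) := [r₁, r₂].filter (· ≠ [])

theorem shape_twoRowTableau (r₁ r₂ : List ℕ) :
    shape (twoRowTableau r₁ r₂) = [r₁.length, r₂.length].filter (· ≠ 0) := by
  by_cases h₁ : r₁ = [] <;> by_cases h₂ : r₂ = [] <;> simp [twoRowTableau, shape, h₁, h₂]

theorem getD_one_twoRowTableau {r₁ r₂ : List ℕ} (h : r₂.length ≤ r₁.length) :
    (twoRowTableau r₁ r₂).getD 1 [] = r₂ := by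
  by_cases h₁ : r₁ = [] <;> by_cases h₂ : r₂ = [] <;> simp_all [twoRowTableau]

theorem twoRowTableau_getD {t : List (List ℕ)} (hne : ∀ r ∈ t, r ≠ []) (h2 : t.length ≤ 2) :
    twoRowTableau (t.getD 0 []) (t.getD 1 []) = t := by
  match t, h2 with
  | [], _ => rfl
  | [a], _ => simp [twoRowTableau, hne a]
  | [a, b], _ => simp [twoRowTableau, hne a, hne b]

/-- Unlike `ColsStrict`, which reads a missing entry of the upper row as `0`, `getElem_lt`
asks for that entry to exist, so it also says that `r₂` is no longer than `r₁`. -/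
structure IsStandardRowPair (ℓ : ℕ) (r₁ r₂ : List ℕ) : Prop where
  pairwise_fst : r₁.Pairwise (· < ·)
  pairwise_snd : r₂.Pairwise (· < ·)
  getElem_lt : ∀ j (h : j < r₂.length), ∃ h' : j < r₁.length, r₁[j] < r₂[j]
  perm : (r₁ ++ r₂).Perm (range' 1 ℓ)

namespace IsStandardRowPair

variable {ℓ : ℕ} {r₁ r₂ : List ℕ}

theorem length_le (h : IsStandardRowPair ℓ r₁ r₂) : r₂.length ≤ r₁.length :=
  le_of_not_gt fun hlt => lt_irrefl _ (h.getElem_lt _ hlt).1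

theorem isSYT (h : IsStandardRowPair ℓ r₁ r₂) : IsSYT ℓ (twoRowTableau r₁ r₂) := by
  have h₁ : r₁.IsChain (· < ·) := isChain_iff_pairwise.2 h.pairwise_fst
  have h₂ : r₂.IsChain (· < ·) := isChain_iff_pairwise.2 h.pairwise_snd
  have hperm := h.perm
  by_cases hr₂ : r₂ = []
  · subst hr₂
    by_cases hr₁ : r₁ = []
    · subst hr₁
      rw [show twoRowTableau [] [] = [] from rfl]
      exact ⟨by simp, by simp [ColsStrict], isChain_nil, by simp, by simpa using hperm⟩
    · rw [show twoRowTableau r₁ [] = [r₁] by simp [twoRowTableau, hr₁]]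
      exact ⟨forall_mem_singleton.2 h₁, by simp [ColsStrict], isChain_singleton _,
        forall_mem_singleton.2 hr₁, by simpa using hperm⟩
  · have hr₁ : r₁ ≠ [] := ne_nil_of_length_pos ((length_pos_iff.2 hr₂).trans_le h.length_le)
    rw [show twoRowTableau r₁ r₂ = [r₁, r₂] by simp [twoRowTableau, hr₁, hr₂]]
    refine ⟨fun r hr => ?_, fun i j hi hj => ?_, isChain_pair.2 h.length_le,
      by simpa using ⟨hr₁, hr₂⟩, by simpa using hperm⟩
    · rcases mem_pair.1 hr with rfl | rfl
      exacts [h₁, h₂]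
    · obtain rfl : i = 0 := by simpa using hi
      change j < r₂.length at hj
      show r₁.getD j 0 < r₂.getD j 0
      obtain ⟨hj₁, hlt⟩ := h.getElem_lt j hj
      rwa [getD_eq_getElem _ _ hj, getD_eq_getElem _ _ hj₁]

end IsStandardRowPair

theorem IsSYT.isStandardRowPair {ℓ : ℕ} {t : List (List ℕ)} (ht : IsSYT ℓ t)
    (h2 : t.length ≤ 2) : IsStandardRowPair ℓ (t.getD 0 []) (t.getD 1 []) := by
  obtain ⟨hrows, hcols, hlen, -, hperm⟩ := ht
  match t, h2 with
  | [], _ => exact ⟨by simp, by simp, by simp, by simpa using hperm⟩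
  | [a], _ =>
    exact ⟨isChain_iff_pairwise.1 (hrows a (by simp)), by simp, by simp, by simpa using hperm⟩
  | [a, b], _ =>
    replace hlen : IsChain (fun x y => y ≤ x) [a.length, b.length] := hlen
    rw [isChain_pair] at hlen
    show IsStandardRowPair ℓ a b
    refine ⟨isChain_iff_pairwise.1 (hrows a (by simp)), isChain_iff_pairwise.1 (hrows b (by simp)),
      fun j hj => ⟨hj.trans_le hlen, ?_⟩, by simpa using hperm⟩
    simpa [getElem?_eq_getElem hj, getElem?_eq_getElem (hj.trans_le hlen)] using
      hcols 0 j (by simp) hj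

def IsBallot (w : List DyckStep) : Prop :=
  ∀ i, (w.take i).count D ≤ (w.take i).count U

theorem IsBallot.count_D_le_count_U {w : List DyckStep} (hw : IsBallot w) :
    w.count D ≤ w.count U := by
  simpa using hw w.length

theorem count_U_add_count_D (w : List DyckStep) : w.count U + w.count D = w.length := by
  induction w with
  | nil => rfl
  | cons s w ih => cases s <;> simp <;> omega

theorem perm_idxsOf_U_append_idxsOf_D (w : List DyckStep) :
    (w.idxsOf U 1 ++ w.idxsOf D 1).Perm (range' 1 w.length) := by
  have hd := disjoint_idxsOf_of_ne (by decide : U ≠ D) w 1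
  refine (perm_ext_iff_of_nodup (nodup_append.2 ⟨nodup_idxsOf, nodup_idxsOf,
    fun i hi j hj hij => hd hi (hij ▸ hj)⟩) nodup_range').2 fun i => ?_
  simp only [mem_append, mem_idxsOf_iff_getElem_sub_pos, beq_iff_eq, mem_range'_1]
  constructor
  · rintro (⟨h1, h, -⟩ | ⟨h1, h, -⟩) <;> omega
  · rintro ⟨h1, h⟩
    have hi : i - 1 < w.length := by omega
    rcases DyckStep.dichotomy w[i - 1] with hs | hs
    · exact Or.inl ⟨h1, hi, hs⟩
    · exact Or.inr ⟨h1, hi, hs⟩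

theorem isStandardRowPair_idxsOf_iff (w : List DyckStep) :
    IsStandardRowPair w.length (w.idxsOf U 1) (w.idxsOf D 1) ↔ IsBallot w := by
  have key := forall_countP_le_iff_forall_getElem_lt (pairwise_idxsOf.imp le_of_lt)
    (pairwise_idxsOf.imp le_of_lt) (disjoint_idxsOf_of_ne (by decide : U ≠ D) w 1)
  simp only [← count_take_eq_countP_idxsOf] at key
  exact ⟨fun h => key.2 h.getElem_lt, fun h => ⟨pairwise_idxsOf, pairwise_idxsOf, key.1 h,
    perm_idxsOf_U_append_idxsOf_D w⟩⟩

/-- `idxsOf _ _ 1` numbers the positions from `1`, so the entries are `1, …, w.length`. -/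
def tableauOf (w : List DyckStep) : List (List ℕ) := twoRowTableau (w.idxsOf U 1) (w.idxsOf D 1)

def wordOfRow (ℓ : ℕ) (r : List ℕ) : List DyckStep :=
  (range' 1 ℓ).map fun i => if i ∈ r then D else U

@[simp]
theorem length_wordOfRow (ℓ : ℕ) (r : List ℕ) : (wordOfRow ℓ r).length = ℓ := by
  simp [wordOfRow]

theorem wordOfRow_idxsOf_D (w : List DyckStep) : wordOfRow w.length (w.idxsOf D 1) = w := by
  refine ext_getElem (by simp) fun i _ hi => ?_
  simp only [wordOfRow, getElem_map, getElem_range', mem_idxsOf_iff_getElem_sub_pos]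
  rcases DyckStep.dichotomy w[i] with hs | hs <;> simp [hs, hi]

theorem IsBallot.isSYT_tableauOf {w : List DyckStep} (hw : IsBallot w) :
    IsSYT w.length (tableauOf w) :=
  ((isStandardRowPair_idxsOf_iff w).2 hw).isSYT

theorem length_tableauOf_le (w : List DyckStep) : (tableauOf w).length ≤ 2 :=
  length_filter_le _ _

theorem shape_tableauOf (w : List DyckStep) :
    shape (tableauOf w) = [w.count U, w.count D].filter (· ≠ 0) := by
  simp [tableauOf, shape_twoRowTableau]

theorem IsBallot.wordOfRow_tableauOf {w : List DyckStep} (hw : IsBallot w) :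
    wordOfRow w.length ((tableauOf w).getD 1 []) = w := by
  rw [tableauOf, getD_one_twoRowTableau (by simpa using hw.count_D_le_count_U),
    wordOfRow_idxsOf_D]

namespace IsStandardRowPair

variable {ℓ : ℕ} {r₁ r₂ : List ℕ}

theorem idxsOf_wordOfRow (h : IsStandardRowPair ℓ r₁ r₂) :
    (wordOfRow ℓ r₂).idxsOf U 1 = r₁ ∧ (wordOfRow ℓ r₂).idxsOf D 1 = r₂ := by
  have hmem : ∀ i, i ∈ r₁ ∨ i ∈ r₂ ↔ 1 ≤ i ∧ i < 1 + ℓ := fun i => by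
    rw [← mem_append, h.perm.mem_iff, mem_range'_1]
  have hd := (nodup_append.1 (h.perm.nodup_iff.2 nodup_range')).2.2
  constructor
  · refine pairwise_idxsOf.eq_of_mem_iff h.pairwise_fst fun i => ?_
    simp only [wordOfRow, mem_idxsOf_iff_getElem_sub_pos, getElem_map, getElem_range',
      length_map, length_range']
    grind
  · refine pairwise_idxsOf.eq_of_mem_iff h.pairwise_snd fun i => ?_
    simp only [wordOfRow, mem_idxsOf_iff_getElem_sub_pos, getElem_map, getElem_range',
      length_map, length_range']
    grind

theorem tableauOf_wordOfRow (h : IsStandardRowPair ℓ r₁ r₂) :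
    tableauOf (wordOfRow ℓ r₂) = twoRowTableau r₁ r₂ := by
  rw [tableauOf, h.idxsOf_wordOfRow.1, h.idxsOf_wordOfRow.2]

theorem isBallot_wordOfRow (h : IsStandardRowPair ℓ r₁ r₂) : IsBallot (wordOfRow ℓ r₂) := by
  rw [← isStandardRowPair_idxsOf_iff, length_wordOfRow, h.idxsOf_wordOfRow.1,
    h.idxsOf_wordOfRow.2]
  exact h

theorem count_D_wordOfRow (h : IsStandardRowPair ℓ r₁ r₂) :
    (wordOfRow ℓ r₂).count D = r₂.length := by
  rw [← length_idxsOf (s := 1), h.idxsOf_wordOfRow.2]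

end IsStandardRowPair

theorem IsSYT.tableauOf_wordOfRow {ℓ : ℕ} {t : List (List ℕ)} (ht : IsSYT ℓ t)
    (h2 : t.length ≤ 2) : tableauOf (wordOfRow ℓ (t.getD 1 [])) = t :=
  (ht.isStandardRowPair h2).tableauOf_wordOfRow.trans (twoRowTableau_getD ht.2.2.2.1 h2)

def ballotPairs (ℓ : ℕ) : Set (List DyckStep × List DyckStep) :=
  {w | w.1.length = ℓ ∧ w.2.length = ℓ ∧ IsBallot w.1 ∧ IsBallot w.2 ∧ w.1.count D = w.2.count D}

def sytPairs (ℓ : ℕ) : Set (List (List ℕ) × List (List ℕ)) :=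
  {pq | IsSYT ℓ pq.1 ∧ IsSYT ℓ pq.2 ∧ shape pq.1 = shape pq.2 ∧ pq.1.length ≤ 2}

theorem map_tableauOf_mem_sytPairs {ℓ : ℕ} {w : List DyckStep × List DyckStep}
    (hw : w ∈ ballotPairs ℓ) : w.map tableauOf tableauOf ∈ sytPairs ℓ := by
  obtain ⟨h₁, h₂, hb₁, hb₂, hD⟩ := hw
  have hU : w.1.count U = w.2.count U := by
    have := count_U_add_count_D w.1
    have := count_U_add_count_D w.2
    omega
  exact ⟨h₁ ▸ hb₁.isSYT_tableauOf, h₂ ▸ hb₂.isSYT_tableauOf,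
    by simp only [Prod.map, shape_tableauOf, hU, hD], length_tableauOf_le _⟩

theorem length_le_two_of_mem_sytPairs {ℓ : ℕ} {pq : List (List ℕ) × List (List ℕ)}
    (h : pq ∈ sytPairs ℓ) : pq.1.length ≤ 2 ∧ pq.2.length ≤ 2 := by
  have := congrArg length h.2.2.1
  simp only [shape, length_map] at this
  exact ⟨h.2.2.2, this ▸ h.2.2.2⟩

theorem map_wordOfRow_mem_ballotPairs {ℓ : ℕ} {pq : List (List ℕ) × List (List ℕ)}
    (h : pq ∈ sytPairs ℓ) :
    pq.map (wordOfRow ℓ <| ·.getD 1 []) (wordOfRow ℓ <| ·.getD 1 []) ∈ ballotPairs ℓ := by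
  have hp := h.1.isStandardRowPair (length_le_two_of_mem_sytPairs h).1
  have hq := h.2.1.isStandardRowPair (length_le_two_of_mem_sytPairs h).2
  have hrow : (pq.1.getD 1 []).length = (pq.2.getD 1 []).length := by
    simpa only [shape, getD_map] using congrArg (·.getD 1 ([] : List ℕ).length) h.2.2.1
  exact ⟨length_wordOfRow _ _, length_wordOfRow _ _, hp.isBallot_wordOfRow, hq.isBallot_wordOfRow,
    by simp only [Prod.map, hp.count_D_wordOfRow, hq.count_D_wordOfRow, hrow]⟩

def ballotPairsEquivSytPairs (ℓ : ℕ) : ballotPairs ℓ ≃ sytPairs ℓ where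
  toFun w := ⟨_, map_tableauOf_mem_sytPairs w.2⟩
  invFun pq := ⟨_, map_wordOfRow_mem_ballotPairs pq.2⟩
  left_inv w := by
    obtain ⟨⟨a, c⟩, ha, hc, hba, hbc, -⟩ := w
    have ea : wordOfRow ℓ ((tableauOf a).getD 1 []) = a := ha ▸ hba.wordOfRow_tableauOf
    have ec : wordOfRow ℓ ((tableauOf c).getD 1 []) = c := hc ▸ hbc.wordOfRow_tableauOf
    exact Subtype.ext (Prod.ext ea ec)
  right_inv pq := by
    obtain ⟨⟨p, q⟩, h⟩ := pq
    obtain ⟨hp, hq⟩ := length_le_two_of_mem_sytPairs h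
    exact Subtype.ext (Prod.ext (h.1.tableauOf_wordOfRow hp) (h.2.1.tableauOf_wordOfRow hq))

def DyckStep.swap : DyckStep → DyckStep
  | U => D
  | D => U

theorem DyckStep.swap_involutive : Function.Involutive DyckStep.swap := by
  intro s
  cases s <;> rfl

def mirror (w : List DyckStep) : List DyckStep := (w.map DyckStep.swap).reverse

@[simp]
theorem mirror_mirror (w : List DyckStep) : mirror (mirror w) = w := by
  simp [mirror, DyckStep.swap_involutive.comp_self]

@[simp]
theorem length_mirror (w : List DyckStep) : (mirror w).length = w.length := by
  simp [mirror]

@[simp]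
theorem count_U_mirror (w : List DyckStep) : (mirror w).count U = w.count D := by
  rw [mirror, count_reverse, ← count_map_of_injective w _ DyckStep.swap_involutive.injective D]
  rfl

@[simp]
theorem count_D_mirror (w : List DyckStep) : (mirror w).count D = w.count U := by
  rw [mirror, count_reverse, ← count_map_of_injective w _ DyckStep.swap_involutive.injective U]
  rfl

theorem take_append_mirror {a c : List DyckStep} {i : ℕ} (hi : a.length ≤ i) :
    (a ++ mirror c).take i = a ++ mirror (c.drop (c.length - (i - a.length))) := by
  rw [take_append, take_of_length_le hi, mirror, take_reverse, mirror, length_map, map_drop]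

theorem isDyck_append_mirror_iff {a c : List DyckStep} (h : a.length = c.length) :
    ((a ++ mirror c).count U = (a ++ mirror c).count D ∧
      ∀ i, ((a ++ mirror c).take i).count D ≤ ((a ++ mirror c).take i).count U) ↔
    IsBallot a ∧ IsBallot c ∧ a.count D = c.count D := by
  have ha := count_U_add_count_D a
  have hc := count_U_add_count_D c
  simp only [count_append, count_U_mirror, count_D_mirror]
  constructor
  · rintro ⟨htot, hpre⟩
    have hD : a.count D = c.count D := by omega
    refine ⟨fun i => ?_, fun j => ?_, hD⟩
    · have := hpre (min i a.length)
      rwa [take_append_of_le_length (min_le_right _ _), ← take_eq_take_min] at this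
    · have := hpre (a.length + (c.length - min j c.length))
      rw [take_append_mirror (Nat.le_add_right _ _),
        show c.length - (a.length + (c.length - min j c.length) - a.length) = min j c.length by
          omega, count_append, count_append, count_U_mirror, count_D_mirror] at this
      rw [take_eq_take_min]
      have := count_take_add_count_drop c (min j c.length) U
      have := count_take_add_count_drop c (min j c.length) D
      omega
  · rintro ⟨hba, hbc, hD⟩
    refine ⟨by omega, fun i => ?_⟩
    rcases le_total i a.length with hi | hi
    · rw [take_append_of_le_length hi]
      exact hba i
    · rw [take_append_mirror hi, count_append, count_append, count_U_mirror, count_D_mirror]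
      have := hbc (c.length - (i - a.length))
      have := count_take_add_count_drop c (c.length - (i - a.length)) U
      have := count_take_add_count_drop c (c.length - (i - a.length)) D
      omega

def dyckWordOfMemBallotPairs {ℓ : ℕ} {w : List DyckStep × List DyckStep}
    (hw : w ∈ ballotPairs ℓ) : DyckWord :=
  have h := (isDyck_append_mirror_iff (hw.1.trans hw.2.1.symm)).2 hw.2.2
  ⟨w.1 ++ mirror w.2, h.1, h.2⟩

theorem semilength_dyckWordOfMemBallotPairs {ℓ : ℕ} {w : List DyckStep × List DyckStep}
    (hw : w ∈ ballotPairs ℓ) : (dyckWordOfMemBallotPairs hw).semilength = ℓ := by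
  obtain ⟨hl, -, -, -, hD⟩ := hw
  have := count_U_add_count_D w.1
  simp only [DyckWord.semilength, dyckWordOfMemBallotPairs, count_append, count_U_mirror]
  omega

theorem DyckWord.halves_mem_ballotPairs {ℓ : ℕ} (p : DyckWord) (hp : p.semilength = ℓ) :
    (p.toList.take ℓ, mirror (p.toList.drop ℓ)) ∈ ballotPairs ℓ := by
  have hlen : p.toList.length = 2 * ℓ := by rw [← hp, DyckWord.two_mul_semilength_eq_length]
  have hl : (p.toList.take ℓ).length = (mirror (p.toList.drop ℓ)).length := by
    simp only [length_take, length_mirror, length_drop]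
    omega
  have hdyck := (isDyck_append_mirror_iff hl).1 (by
    rw [mirror_mirror, take_append_drop]
    exact ⟨p.count_U_eq_count_D, p.count_D_le_count_U⟩)
  exact ⟨by simp only [length_take]; omega, by simp only [length_mirror, length_drop]; omega,
    hdyck⟩

def ballotPairsEquivDyckWord (ℓ : ℕ) : ballotPairs ℓ ≃ {p : DyckWord // p.semilength = ℓ} where
  toFun w := ⟨dyckWordOfMemBallotPairs w.2, semilength_dyckWordOfMemBallotPairs w.2⟩
  invFun p := ⟨_, p.1.halves_mem_ballotPairs p.2⟩
  left_inv w := by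
    obtain ⟨⟨a, c⟩, ha, -⟩ := w
    ext1
    simp [dyckWordOfMemBallotPairs, take_left' ha, drop_left' ha]
  right_inv p := by
    ext1
    ext1
    simp [dyckWordOfMemBallotPairs]

/-- The number of pairs `(P,Q)` of standard Young tableaux of the same shape `λ ⊢ ℓ` with
at most two rows equals the Catalan number `C_ℓ`. -/
theorem stmt_11 (ℓ : ℕ) :
    Nat.card {pq : List (List ℕ) × List (List ℕ) //
      IsSYT ℓ pq.1 ∧ IsSYT ℓ pq.2 ∧ shape pq.1 = shape pq.2 ∧ pq.1.length ≤ 2}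
      = catalan ℓ :=
  calc Nat.card (sytPairs ℓ)
      = Nat.card (ballotPairs ℓ) := Nat.card_congr (ballotPairsEquivSytPairs ℓ).symm
    _ = Nat.card {p : DyckWord // p.semilength = ℓ} :=
      Nat.card_congr (ballotPairsEquivDyckWord ℓ)
    _ = catalan ℓ := by
      rw [Nat.card_eq_fintype_card, DyckWord.card_dyckWord_semilength_eq_catalan]
end

section
/- In the group algebra C S_4, let f_i = 1 − s_i for i = 1, 2, 3 (s_i the adjacent transpositions), and g_i = f_i f_{i+1} f_i − f_i for i = 1, 2. Then g_1 g_2 g_1 − 4 g_1 = 8 Σ_σ (−1)^{|σ|} σ, where the sum is over all permutations σ of {1,2,3,4} and |σ| denotes the sign exponent (so (−1)^{|σ|} is the sign of σ). -/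
/-!
`ggen 4 0` and `ggen 4 1` are the antisymmetrizers of the stabilizers `H` of `3` and `K` of `0`
in `Perm (Fin 4)`, both copies of `S_3`. As `H ∩ K = ⟨swap 1 2⟩` has order 2, their product is
`2 Σ_{σ ∈ HK} sgn σ · σ` with `HK = {σ | σ 0 ≠ 3}`, and multiplying once more by the
antisymmetrizer of `H` gives the claim. Each of these identities is a finite computation with
integer coefficients, done by `decide` on integer-valued functions on `S_4` under convolution,
which `toMonoidAlgebra` turns into products in `ℂ S_4`.
-/

/-- The element `f_i = 1 − s_i` of the complex group algebra of `S_k`, where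
`s_i = (i, i+1)` is an adjacent transposition (here `0`-indexed: for `i + 1 < k`, `s_i`
swaps the `i`-th and `(i+1)`-st letters); `0` for out-of-range `i`. -/
noncomputable def fgen (k i : ℕ) : MonoidAlgebra ℂ (Equiv.Perm (Fin k)) :=
  if h : i + 1 < k then
    1 - MonoidAlgebra.of ℂ (Equiv.Perm (Fin k))
      (Equiv.swap ⟨i, Nat.lt_of_succ_lt h⟩ ⟨i + 1, h⟩)
  else 0

/-- `g_i = f_i f_{i+1} f_i − f_i` in `ℂ S_k`. -/
noncomputable def ggen (k i : ℕ) : MonoidAlgebra ℂ (Equiv.Perm (Fin k)) :=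
  fgen k i * fgen k (i + 1) * fgen k i - fgen k i

section Convolution

variable {G : Type*} [Group G] [Fintype G]

def convolve (f g : G → ℤ) : G → ℤ := fun x => ∑ p, f p * g (p⁻¹ * x)

variable (k : Type*) [CommRing k]

noncomputable def toMonoidAlgebra (f : G → ℤ) : MonoidAlgebra k G :=
  ∑ σ, (f σ : k) • MonoidAlgebra.of k G σ

theorem toMonoidAlgebra_sub (f g : G → ℤ) :
    toMonoidAlgebra k (f - g) = toMonoidAlgebra k f - toMonoidAlgebra k g := by
  simp [toMonoidAlgebra, sub_smul, Finset.sum_sub_distrib]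

theorem toMonoidAlgebra_nsmul (n : ℕ) (f : G → ℤ) :
    toMonoidAlgebra k (n • f) = (n : MonoidAlgebra k G) * toMonoidAlgebra k f := by
  simp only [toMonoidAlgebra, Finset.mul_sum, Pi.smul_apply, nsmul_eq_mul, Int.cast_mul,
    Int.cast_natCast, mul_smul, Nat.cast_smul_eq_nsmul]

theorem toMonoidAlgebra_convolve (f g : G → ℤ) :
    toMonoidAlgebra k (convolve f g) = toMonoidAlgebra k f * toMonoidAlgebra k g := by
  rw [toMonoidAlgebra, toMonoidAlgebra, toMonoidAlgebra, Finset.sum_mul_sum]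
  have reindex (p : G) :
      ∑ q, ((f p : k) • MonoidAlgebra.of k G p) * ((g q : k) • MonoidAlgebra.of k G q)
        = ∑ x, ((f p * g (p⁻¹ * x) : ℤ) : k) • MonoidAlgebra.of k G x := by
    rw [← Equiv.sum_comp (Equiv.mulLeft p)
      (fun x => ((f p * g (p⁻¹ * x) : ℤ) : k) • MonoidAlgebra.of k G x)]
    simp [Int.cast_mul]
  simp_rw [reindex, convolve]
  rw [Finset.sum_comm]
  simp [Finset.sum_smul]

end Convolution

open Equiv

section Permutations

variable {α : Type*} [DecidableEq α] [Fintype α]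

-- Written with `if` rather than `Pi.single`, which `decide` cannot evaluate.
def oneSubSwap (i j : α) : Perm α → ℤ :=
  fun σ => (if σ = 1 then 1 else 0) - (if σ = swap i j then 1 else 0)

def signOn (p : Perm α → Prop) [DecidablePred p] : Perm α → ℤ :=
  fun σ => if p σ then (Perm.sign σ : ℤ) else 0

theorem toMonoidAlgebra_oneSubSwap (k : Type*) [CommRing k] (i j : α) :
    toMonoidAlgebra k (oneSubSwap i j) = 1 - MonoidAlgebra.of k (Perm α) (swap i j) := by
  simp [toMonoidAlgebra, oneSubSwap, sub_smul, Finset.sum_sub_distrib, ite_smul,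
    MonoidAlgebra.one_def]

end Permutations

theorem fgen_eq_toMonoidAlgebra {n i : ℕ} (h : i + 1 < n) :
    fgen n i = toMonoidAlgebra ℂ (oneSubSwap (⟨i, by omega⟩ : Fin n) ⟨i + 1, h⟩) := by
  rw [fgen, dif_pos h, toMonoidAlgebra_oneSubSwap]

theorem ggen_eq_toMonoidAlgebra {n i : ℕ} (h : i + 2 < n) :
    ggen n i = toMonoidAlgebra ℂ
      (convolve (convolve (oneSubSwap (⟨i, by omega⟩ : Fin n) ⟨i + 1, by omega⟩)
          (oneSubSwap ⟨i + 1, by omega⟩ ⟨i + 2, h⟩))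
          (oneSubSwap ⟨i, by omega⟩ ⟨i + 1, by omega⟩)
        - oneSubSwap ⟨i, by omega⟩ ⟨i + 1, by omega⟩) := by
  rw [ggen, fgen_eq_toMonoidAlgebra (by omega), fgen_eq_toMonoidAlgebra h, toMonoidAlgebra_sub,
    toMonoidAlgebra_convolve, toMonoidAlgebra_convolve]

set_option maxRecDepth 10000 in
theorem ggen_four_zero : ggen 4 0 = toMonoidAlgebra ℂ (signOn fun σ => σ 3 = 3) := by
  rw [ggen_eq_toMonoidAlgebra (by norm_num)]
  congr 1
  decide

set_option maxRecDepth 10000 in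
theorem ggen_four_one : ggen 4 1 = toMonoidAlgebra ℂ (signOn fun σ => σ 0 = 0) := by
  rw [ggen_eq_toMonoidAlgebra (by norm_num)]
  congr 1
  decide

theorem convolve_signOn_fixed_three_fixed_zero :
    convolve (signOn fun σ : Perm (Fin 4) => σ 3 = 3) (signOn fun σ => σ 0 = 0)
      = 2 • signOn fun σ => σ 0 ≠ 3 := by
  decide

theorem convolve_signOn_sub_eq_eight_sign :
    convolve (2 • signOn fun σ : Perm (Fin 4) => σ 0 ≠ 3) (signOn fun σ => σ 3 = 3)
      - 4 • (signOn fun σ => σ 3 = 3) = 8 • fun σ => (Perm.sign σ : ℤ) := by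
  decide

/-- In `ℂ S_4`, with `f_i = 1 − s_i` (`i = 1, 2, 3`, here indexed `0, 1, 2`) and
`g_i = f_i f_{i+1} f_i − f_i`, one has
`g_1 g_2 g_1 − 4 g_1 = 8 · Σ_σ (−1)^{|σ|} σ`, the sum over all permutations of
`{1,2,3,4}` weighted by their signs. -/
theorem stmt_18 :
    ggen 4 0 * ggen 4 1 * ggen 4 0 - 4 * ggen 4 0
      = 8 * ∑ σ : Equiv.Perm (Fin 4),
          ((Equiv.Perm.sign σ : ℤ) : ℂ) • MonoidAlgebra.of ℂ (Equiv.Perm (Fin 4)) σ := by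
  have four_mul (f : Perm (Fin 4) → ℤ) :
      4 * toMonoidAlgebra ℂ f = toMonoidAlgebra ℂ (4 • f) := by
    rw [toMonoidAlgebra_nsmul, Nat.cast_ofNat]
  rw [ggen_four_zero, ggen_four_one, ← toMonoidAlgebra_convolve,
    convolve_signOn_fixed_three_fixed_zero, ← toMonoidAlgebra_convolve, four_mul,
    ← toMonoidAlgebra_sub, convolve_signOn_sub_eq_eight_sign, toMonoidAlgebra_nsmul, Nat.cast_ofNat,
    toMonoidAlgebra]
end
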